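/- arXiv:1602.08879 — 6 statements merged into one kernel-verified Lean document; each statement's English description precedes it below -/
import Mathlib

section
/- A Skolem sequence of order m exists if and only if m ≡ 0 or 1 (mod 4). -/
/-- A Skolem sequence of order `m`: pairs `(a i, b i)` for symbols `i+1`
(`i : Fin m`), with `b i - a i = i+1`, whose entries partition `{1,…,2m}`. -/
def IsSkolemSeq (m : ℕ) (a b : Fin m → ℕ) : Prop :=
  Function.Injective (Sum.elim a b) ∧
  (∀ i : Fin m, a i + ((i : ℕ) + 1) = b i) ∧
  (∀ x : ℕ, (∃ s : Fin m ⊕ Fin m, Sum.elim a b s = x) ↔ x ∈ Finset.Icc 1 (2 * m))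

/-!
Summing all positions of a Skolem sequence of order `m` gives `2 S + m(m+1)/2 = m(2m+1)`, where
`S` is the sum of the first positions, so `4 S = 3m² + m`, which forces `m ≡ 0, 1 (mod 4)`.
Conversely, Skolem's explicit sequences for `m = 4k` and `m = 4k+1` are checked directly: each
symbol's first position is given by a piecewise-affine formula, and the partition property reduces
to linear arithmetic on each piece.
-/

open Finset Function

theorem Finset.sum_Icc_one_eq_sum_range (n : ℕ) : ∑ x ∈ Icc 1 n, x = ∑ i ∈ range n, (i + 1) := by
  rw [← Ico_add_one_right_eq_Icc, sum_Ico_eq_sum_range]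
  simp only [Nat.add_sub_cancel, add_comm]

theorem Finset.sum_range_add_one_mul_two (n : ℕ) : (∑ i ∈ range n, (i + 1)) * 2 = n * (n + 1) := by
  have := sum_range_id_mul_two (n + 1)
  rw [sum_range_succ'] at this
  simpa [mul_comm] using this

theorem Nat.mod_four_eq_zero_or_one_of_dvd {m : ℕ} (h : 4 ∣ 3 * m ^ 2 + m) :
    m % 4 = 0 ∨ m % 4 = 1 := by
  have := Nat.mod_lt m (show 4 > 0 by norm_num)
  interval_cases hm : m % 4 <;>
    simp_all [Nat.dvd_iff_mod_eq_zero, Nat.add_mod, Nat.mul_mod, Nat.pow_mod]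

namespace IsSkolemSeq

variable {m : ℕ} {a b : Fin m → ℕ}

theorem image_eq (h : IsSkolemSeq m a b) : univ.image (Sum.elim a b) = Icc 1 (2 * m) := by
  ext x
  simpa using h.2.2 x

theorem of_injective (hinj : Injective (Sum.elim a b)) (hdiff : ∀ i : Fin m, a i + (i + 1) = b i)
    (hpos : ∀ i, 1 ≤ a i) (hle : ∀ i, b i ≤ 2 * m) : IsSkolemSeq m a b := by
  have hsub : univ.image (Sum.elim a b) ⊆ Icc 1 (2 * m) := by
    rintro _ hx
    obtain ⟨i | i, -, rfl⟩ := mem_image.1 hx <;>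
      simp only [Sum.elim_inl, Sum.elim_inr, mem_Icc] <;>
      have := hpos i <;> have := hle i <;> have := hdiff i <;> omega
  have hcard : #(Icc 1 (2 * m)) ≤ #(univ.image (Sum.elim a b)) := by
    simp [card_image_of_injective _ hinj, two_mul]
  have himage := eq_of_subset_of_card_le hsub hcard
  refine ⟨hinj, hdiff, fun x => ?_⟩
  rw [← himage]
  simp

theorem four_mul_sum_fst (h : IsSkolemSeq m a b) : 4 * ∑ i, a i = 3 * m ^ 2 + m := by
  have htotal : ∑ i, a i + ∑ i, b i = ∑ i ∈ range (2 * m), (i + 1) := by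
    rw [← sum_Icc_one_eq_sum_range, ← h.image_eq, sum_image fun _ _ _ _ hst => h.1 hst,
      Fintype.sum_sum_type]
    rfl
  have hsnd : ∑ i, b i = ∑ i, a i + ∑ i ∈ range m, (i + 1) := by
    rw [← Fin.sum_univ_eq_sum_range (· + 1), ← sum_add_distrib]
    exact sum_congr rfl fun i _ => (h.2.1 i).symm
  have := sum_range_add_one_mul_two m
  have := sum_range_add_one_mul_two (2 * m)
  linarith

theorem mod_four (h : IsSkolemSeq m a b) : m % 4 = 0 ∨ m % 4 = 1 :=
  Nat.mod_four_eq_zero_or_one_of_dvd ⟨_, h.four_mul_sum_fst.symm⟩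

end IsSkolemSeq

theorem exists_isSkolemSeq_of_firstPos (m : ℕ) (A : ℕ → ℕ)
    (hpos : ∀ d ∈ Icc 1 m, 1 ≤ A d) (hle : ∀ d ∈ Icc 1 m, A d + d ≤ 2 * m)
    (hfst : ∀ d ∈ Icc 1 m, ∀ e ∈ Icc 1 m, A d = A e → d = e)
    (hsnd : ∀ d ∈ Icc 1 m, ∀ e ∈ Icc 1 m, A d + d = A e + e → d = e)
    (hdisj : ∀ d ∈ Icc 1 m, ∀ e ∈ Icc 1 m, A d ≠ A e + e) :
    ∃ a b : Fin m → ℕ, IsSkolemSeq m a b := by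
  have mem (i : Fin m) : (i : ℕ) + 1 ∈ Icc 1 m := mem_Icc.2 ⟨by omega, i.2⟩
  refine ⟨fun i => A (i + 1), fun i => A (i + 1) + (i + 1),
    IsSkolemSeq.of_injective ?_ (fun _ => rfl) (fun i => hpos _ (mem i)) (fun i => hle _ (mem i))⟩
  rintro (i | i) (j | j) h <;> simp only [Sum.elim_inl, Sum.elim_inr] at h
  · exact congrArg Sum.inl (Fin.ext (by simpa using hfst _ (mem i) _ (mem j) h))
  · exact (hdisj _ (mem i) _ (mem j) h).elim
  · exact (hdisj _ (mem j) _ (mem i) h.symm).elim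
  · exact congrArg Sum.inr (Fin.ext (by simpa using hsnd _ (mem i) _ (mem j) h))

/- Skolem's construction: the symbols of one parity within one range of values occupy pairs nested
around a common centre, e.g. the odd `d ≤ 2k` sit at `6k + 1 - (d-1)/2` and `6k + 2 + (d-1)/2`. -/
def skolemFirstPos₀ (k d : ℕ) : ℕ :=
  if d % 2 = 1 ∧ d ≤ 2*k then 6*k+1-(d-1)/2
  else if d % 2 = 0 ∧ d ≤ 2*k then 2*k+1-(d-2)/2
  else if d = 2*k+1 then 1
  else if d % 2 = 0 ∧ d ≤ 4*k-2 then 5*k-(d-2*k-2)/2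
  else if d % 2 = 1 then k-(d-2*k-3)/2
  else k+1

def skolemFirstPos₁ (k d : ℕ) : ℕ :=
  if d = 1 then 7*k+1
  else if d % 2 = 0 ∧ d ≤ 2*k-2 then 6*k-(d-2)/2
  else if d % 2 = 1 ∧ d ≤ 4*k-1 then 2*k-1-(d-3)/2
  else if d = 2*k then 2*k+1
  else if d % 2 = 0 then 5*k+1-(d-2*k-2)/2
  else 2*k

set_option maxHeartbeats 1000000 in
theorem exists_isSkolemSeq_four_mul (k : ℕ) : ∃ a b : Fin (4 * k) → ℕ, IsSkolemSeq (4 * k) a b := by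
  apply exists_isSkolemSeq_of_firstPos (4 * k) (skolemFirstPos₀ k) <;>
    simp only [mem_Icc, skolemFirstPos₀] <;> intros <;> split_ifs at * <;> omega

set_option maxHeartbeats 1000000 in
theorem exists_isSkolemSeq_four_mul_add_one (k : ℕ) :
    ∃ a b : Fin (4 * k + 1) → ℕ, IsSkolemSeq (4 * k + 1) a b := by
  apply exists_isSkolemSeq_of_firstPos (4 * k + 1) (skolemFirstPos₁ k) <;>
    simp only [mem_Icc, skolemFirstPos₁] <;> intros <;> split_ifs at * <;> omega

theorem skolemSeq_exists_iff (m : ℕ) :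
    (∃ a b : Fin m → ℕ, IsSkolemSeq m a b) ↔ m % 4 = 0 ∨ m % 4 = 1 := by
  refine ⟨fun ⟨_, _, h⟩ => h.mod_four, ?_⟩
  rintro (h | h)
  · obtain ⟨k, rfl⟩ : ∃ k, m = 4 * k := ⟨m / 4, by omega⟩
    exact exists_isSkolemSeq_four_mul k
  · obtain ⟨k, rfl⟩ : ∃ k, m = 4 * k + 1 := ⟨m / 4, by omega⟩
    exact exists_isSkolemSeq_four_mul_add_one k
end

section
/- A Skolem circle of order m exists if and only if m ≡ 0 or 1 (mod 4). -/
/-!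
Necessity is a parity count. The `2m` entries of a Skolem circle exhaust `ZMod (2m)`, so
`∑ aᵢ + ∑ bᵢ = C(2m, 2)`, while `∑ (bᵢ - aᵢ) = 1 + ⋯ + m = C(m + 1, 2)`. Hence
`C(2m, 2) - C(m + 1, 2) = 2 ∑ aᵢ` modulo the even number `2m`, so the two binomial coefficients
have the same parity. By Lucas' theorem `C(n, 2) ≡ ⌊n / 2⌋ (mod 2)`, which turns this into
`m ≡ ⌊(m + 1) / 2⌋ (mod 2)`, i.e. `m ≡ 0, 1 (mod 4)`.

Sufficiency is by explicit constructions for `m = 4k` and `m = 4k + 1`. For each parity of the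
difference `d` and each half of its range, the pairs are nested arcs `(c - j, c + j)` of the circle
around a common centre `c`; two or three exceptional pairs fill the remaining positions.
-/

/-- A Skolem circle of order `m`: pairs `(a i, b i)` of positions in `ZMod (2m)`
for the symbols `i+1` (`i : Fin m`), all `2m` entries distinct (hence a partition
of `ZMod (2m)`), with `b i - a i ≡ i+1 (mod 2m)`. -/
def IsSkolemCircle (m : ℕ) (a b : Fin m → ZMod (2 * m)) : Prop :=
  Function.Injective (Sum.elim a b) ∧
  (∀ i : Fin m, b i - a i = (((i : ℕ) + 1 : ℕ) : ZMod (2 * m)))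

open Finset

theorem ZMod.sum_univ_eq_choose_two (n : ℕ) [NeZero n] :
    ∑ x : ZMod n, x = (n.choose 2 : ZMod n) := by
  rw [Nat.choose_two_right, ← sum_range_id, Nat.cast_sum]
  exact sum_nbij' ZMod.val (↑) (fun x _ => mem_range.2 (ZMod.val_lt x)) (fun _ _ => mem_univ _)
    (fun x _ => ZMod.natCast_zmod_val x) (fun i hi => ZMod.val_cast_of_lt (mem_range.1 hi))
    (fun x _ => (ZMod.natCast_zmod_val x).symm)

theorem Finset.sum_range_add_one_eq_choose_two (m : ℕ) :
    ∑ i ∈ range m, (i + 1) = (m + 1).choose 2 := by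
  rw [Nat.choose_two_right, ← sum_range_id, sum_range_succ', add_zero]

theorem Nat.choose_two_modEq_div_two (n : ℕ) : n.choose 2 ≡ n / 2 [MOD 2] := by
  simpa using Choose.choose_modEq_choose_mod_mul_choose_div_nat (n := n) (k := 2) (p := 2)

theorem IsSkolemCircle.choose_two_modEq {m : ℕ} {a b : Fin m → ZMod (2 * m)}
    (h : IsSkolemCircle m a b) : (2 * m).choose 2 ≡ (m + 1).choose 2 [MOD 2] := by
  rcases Nat.eq_zero_or_pos m with rfl | hm
  · rfl
  have : NeZero (2 * m) := ⟨by omega⟩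
  have hbij : Function.Bijective (Sum.elim a b) :=
    (Fintype.bijective_iff_injective_and_card _).2 ⟨h.1, by simp [ZMod.card, two_mul]⟩
  have hsum : ∑ i, a i + ∑ i, b i = ((2 * m).choose 2 : ZMod (2 * m)) := by
    rw [← ZMod.sum_univ_eq_choose_two,
      ← Fintype.sum_bijective _ hbij _ (fun x => x) fun _ => rfl, Fintype.sum_sum_type]
    rfl
  have hdiff : ∑ i, b i - ∑ i, a i = ((m + 1).choose 2 : ZMod (2 * m)) := by
    rw [← sum_sub_distrib, sum_congr rfl fun i _ => h.2 i, ← Nat.cast_sum,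
      Fin.sum_univ_eq_sum_range (fun i => i + 1), sum_range_add_one_eq_choose_two]
  have htwice : ((2 * m).choose 2 : ZMod (2 * m)) - (m + 1).choose 2 = 2 * ∑ i, a i := by
    rw [← hsum, ← hdiff]; ring
  have hmod2 := congrArg (ZMod.castHom (dvd_mul_right 2 m) (ZMod 2)) htwice
  rw [map_sub, map_natCast, map_natCast, map_mul, map_ofNat, show (2 : ZMod 2) = 0 from rfl,
    zero_mul, sub_eq_zero] at hmod2
  exact (ZMod.natCast_eq_natCast_iff _ _ 2).1 hmod2

theorem IsSkolemCircle.mod_four {m : ℕ} {a b : Fin m → ZMod (2 * m)}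
    (h : IsSkolemCircle m a b) : m % 4 = 0 ∨ m % 4 = 1 := by
  have := (Nat.choose_two_modEq_div_two (2 * m)).symm.trans <| h.choose_two_modEq.trans <|
    Nat.choose_two_modEq_div_two (m + 1)
  unfold Nat.ModEq at this
  omega

theorem isSkolemCircle_of_positions {m : ℕ} {A B : ℕ → ℕ}
    (hA : ∀ d ∈ Set.Icc 1 m, A d < 2 * m) (hB : ∀ d ∈ Set.Icc 1 m, B d < 2 * m)
    (hAinj : Set.InjOn A (Set.Icc 1 m)) (hBinj : Set.InjOn B (Set.Icc 1 m))
    (hAB : ∀ d ∈ Set.Icc 1 m, ∀ e ∈ Set.Icc 1 m, A d ≠ B e)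
    (hdiff : ∀ d ∈ Set.Icc 1 m, B d = A d + d ∨ B d + 2 * m = A d + d) :
    IsSkolemCircle m (fun i => A (i + 1)) (fun i => B (i + 1)) := by
  have hcast : Set.InjOn (Nat.cast : ℕ → ZMod (2 * m)) (Set.Iio (2 * m)) :=
    fun x hx y hy hxy => by
      simpa [Nat.mod_eq_of_lt (Set.mem_Iio.1 hx), Nat.mod_eq_of_lt (Set.mem_Iio.1 hy)] using
        (ZMod.natCast_eq_natCast_iff' x y _).1 hxy
  have hmem (i : Fin m) : (i : ℕ) + 1 ∈ Set.Icc 1 m := ⟨by omega, i.isLt⟩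
  have hsucc : Function.Injective fun i : Fin m => (i : ℕ) + 1 := fun i j h =>
    Fin.ext (Nat.add_right_cancel h)
  refine ⟨Function.Injective.sumElim ?_ ?_ fun i j h => ?_, fun i => ?_⟩
  · exact fun i j h => hsucc (hAinj (hmem i) (hmem j) (hcast (hA _ (hmem i)) (hA _ (hmem j)) h))
  · exact fun i j h => hsucc (hBinj (hmem i) (hmem j) (hcast (hB _ (hmem i)) (hB _ (hmem j)) h))
  · exact hAB _ (hmem i) _ (hmem j) (hcast (hA _ (hmem i)) (hB _ (hmem j)) h)
  · show (B (i + 1) : ZMod (2 * m)) - A (i + 1) = _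
    rcases hdiff _ (hmem i) with h | h
    · rw [h, Nat.cast_add, add_sub_cancel_left]
    · have := congrArg (Nat.cast : ℕ → ZMod (2 * m)) h
      rw [Nat.cast_add, Nat.cast_add, ZMod.natCast_self, add_zero] at this
      rw [this, add_sub_cancel_left]

namespace SkolemCircle

def fourMulFst (k d : ℕ) : ℕ :=
  if d % 2 = 1 then
    if d + 1 ≤ 2*k then 3*k - 1 - d/2
    else if d = 2*k+1 then 7*k - 1
    else 7*k - 1 - d/2
  else
    if d ≤ 2*k then 7*k - 1 - d/2
    else if d + 2 ≤ 4*k then 3*k - d/2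
    else 0

def fourMulSnd (k d : ℕ) : ℕ :=
  if d % 2 = 1 then
    if d + 1 ≤ 2*k then 3*k + d/2
    else if d = 2*k+1 then k
    else d/2 - k
  else
    if d ≤ 2*k then 7*k - 1 + d/2
    else if d + 2 ≤ 4*k then 3*k + d/2
    else 4*k

theorem exists_isSkolemCircle_four_mul (k : ℕ) : ∃ a b, IsSkolemCircle (4 * k) a b := by
  refine ⟨_, _, isSkolemCircle_of_positions (A := fourMulFst k) (B := fourMulSnd k)
    ?_ ?_ ?_ ?_ ?_ ?_⟩ <;> simp only [Set.InjOn, Set.mem_Icc, fourMulFst, fourMulSnd] <;>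
    intros <;> split_ifs at * <;> omega

def fourMulAddOneFst (k d : ℕ) : ℕ :=
  if d % 2 = 1 then
    if d + 1 ≤ 2*k then 5*k - d/2
    else if d = 2*k+1 then 0
    else if d + 2 ≤ 4*k+1 then 9*k + 2 - d/2
    else 2*k
  else
    if d + 2 ≤ 2*k then k - d/2
    else if d = 2*k then 7*k + 2
    else 5*k + 1 - d/2

def fourMulAddOneSnd (k d : ℕ) : ℕ :=
  if d % 2 = 1 then
    if d + 1 ≤ 2*k then 5*k + d/2 + 1
    else if d = 2*k+1 then 2*k + 1
    else if d + 2 ≤ 4*k+1 then k + d/2 + 1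
    else 6*k + 1
  else
    if d + 2 ≤ 2*k then k + d/2
    else if d = 2*k then k
    else 5*k + 1 + d/2

theorem exists_isSkolemCircle_four_mul_add_one (k : ℕ) :
    ∃ a b, IsSkolemCircle (4 * k + 1) a b := by
  refine ⟨_, _, isSkolemCircle_of_positions (A := fourMulAddOneFst k) (B := fourMulAddOneSnd k)
    ?_ ?_ ?_ ?_ ?_ ?_⟩ <;>
    simp only [Set.InjOn, Set.mem_Icc, fourMulAddOneFst, fourMulAddOneSnd] <;> intros <;>
    split_ifs at * <;> omega

end SkolemCircle

theorem skolemCircle_exists_iff (m : ℕ) :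
    (∃ a b : Fin m → ZMod (2 * m), IsSkolemCircle m a b) ↔ m % 4 = 0 ∨ m % 4 = 1 := by
  refine ⟨fun ⟨_, _, h⟩ => h.mod_four, fun h => ?_⟩
  obtain ⟨k, rfl | rfl⟩ : ∃ k, m = 4 * k ∨ m = 4 * k + 1 := ⟨m / 4, by omega⟩
  · exact SkolemCircle.exists_isSkolemCircle_four_mul k
  · exact SkolemCircle.exists_isSkolemCircle_four_mul_add_one k
end

section
/- If m ∈ {2, 3, 6, 7} (mod 4 residue 2 or 3), i.e., m ≡ 2 or 3 (mod 4), then no Skolem circle of order m exists. -/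
/-!
Reduce everything modulo 2, where `b - a = b + a`. Summing the defining relations gives
`∑ (i + 1) ≡ ∑ (a i + b i) = ∑_{x : ZMod (2m)} x ≡ m (mod 2)`, since the `a i` and `b i` run
through `ZMod (2m)` exactly once. As `2 ∑_{i<m} (i + 1) = m (m + 1)`, doubling gives
`m (m + 1) ≡ 2 m (mod 4)`, which fails for `m ≡ 2, 3 (mod 4)`.
-/

open Finset

theorem ZMod.sum_val_eq_sum_range {n : ℕ} [NeZero n] {M : Type*} [AddCommMonoid M]
    (f : ℕ → M) : ∑ x : ZMod n, f x.val = ∑ i ∈ range n, f i :=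
  sum_nbij' ZMod.val Nat.cast (fun x _ => mem_range.2 x.val_lt) (fun _ _ => mem_univ _)
    (fun x _ => ZMod.natCast_zmod_val x) (fun _ hi => ZMod.val_cast_of_lt (mem_range.1 hi))
    (fun _ _ => rfl)

theorem sum_range_two_mul_cast_zmod_two (m : ℕ) : ∑ i ∈ range (2 * m), (i : ZMod 2) = m := by
  induction m with
  | zero => simp
  | succ m ih =>
    rw [Nat.mul_succ, sum_range_succ, sum_range_succ, ih]
    push_cast
    ring_nf
    reduce_mod_char

theorem IsSkolemCircle.bijective {m : ℕ} [NeZero m] {a b : Fin m → ZMod (2 * m)}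
    (h : IsSkolemCircle m a b) : Function.Bijective (Sum.elim a b) :=
  (Fintype.bijective_iff_injective_and_card _).2 ⟨h.1, by simp [two_mul]⟩

theorem IsSkolemCircle.sum_range_succ_cast_zmod_two {m : ℕ} [NeZero m]
    {a b : Fin m → ZMod (2 * m)} (h : IsSkolemCircle m a b) :
    ∑ i ∈ range m, ((i + 1 : ℕ) : ZMod 2) = m := by
  let φ := ZMod.castHom (dvd_mul_right 2 m) (ZMod 2)
  calc ∑ i ∈ range m, ((i + 1 : ℕ) : ZMod 2)
      = ∑ i : Fin m, (φ (b i) - φ (a i)) := by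
        rw [← Fin.sum_univ_eq_sum_range]
        refine sum_congr rfl fun i _ => ?_
        rw [← map_sub, h.2 i, map_natCast]
    _ = ∑ s, φ (Sum.elim a b s) := by
        simp only [CharTwo.sub_eq_add, Fintype.sum_sum_type, Sum.elim_inl, Sum.elim_inr,
          sum_add_distrib, add_comm]
    _ = ∑ x, φ x := Fintype.sum_bijective _ h.bijective _ _ fun _ => rfl
    _ = ∑ i ∈ range (2 * m), (i : ZMod 2) := by
        simp only [φ, ZMod.castHom_apply, ZMod.cast_eq_val, ZMod.sum_val_eq_sum_range]
    _ = m := sum_range_two_mul_cast_zmod_two m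

theorem mod_four_eq_zero_or_one_of_sum_range_succ {m : ℕ}
    (h : ∑ i ∈ range m, ((i + 1 : ℕ) : ZMod 2) = m) : m % 4 = 0 ∨ m % 4 = 1 := by
  rw [← Nat.cast_sum, ZMod.natCast_eq_natCast_iff] at h
  have hgauss : 2 * ∑ i ∈ range m, (i + 1) = (m + 1) * m := by
    have := sum_range_id_mul_two (m + 1)
    rw [sum_range_succ', Nat.add_sub_cancel] at this
    linarith
  have hdouble := h.mul_left' 2
  rw [hgauss] at hdouble
  unfold Nat.ModEq at hdouble
  rw [Nat.mul_mod, Nat.add_mod, Nat.mul_mod 2] at hdouble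
  have : m % 4 < 4 := Nat.mod_lt _ (by norm_num)
  interval_cases m % 4 <;> simp_all

theorem no_skolemCircle_of_mod_four (m : ℕ) (h : m % 4 = 2 ∨ m % 4 = 3) :
    ¬ ∃ a b : Fin m → ZMod (2 * m), IsSkolemCircle m a b := by
  rintro ⟨a, b, hab⟩
  have : NeZero m := ⟨by omega⟩
  have := mod_four_eq_zero_or_one_of_sum_range_succ hab.sum_range_succ_cast_zmod_two
  omega
end

section
/- If S_1, …, S_j are Skolem-type sequences over pairwise disjoint symbol sets X_1, …, X_j whose union is {1,…,m}, then the concatenation of S_1,…,S_j wrapped around a cycle of length 2m is a Skolem circle of order m (moreover a j-edge-removable one). -/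
/-!
Every symbol `x` of block `k` occurs in the concatenation exactly at the two positions it
occupies inside block `k`, shifted by the start of that block: disjointness of the symbol sets
rules out occurrences in other blocks. Read around the `2m`-cycle this is a Skolem circle.
Since no pair straddles a block boundary, cutting the cycle just before the start of any block
leaves every pair intact, and as the blocks are nonempty their starts give `j` distinct edges.
-/

/-- A weak Skolem labeling of the cycle on `2m` vertices (a Skolem circle, in
labeling form): each symbol `x ∈ {1,…,m}` labels exactly two vertices, at
cyclic distance `x`. -/
def IsSkolemCircleLabel (m : ℕ) (f : ZMod (2 * m) → ℕ) : Prop :=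
  ∀ x ∈ Finset.Icc 1 m, ∃ v : ZMod (2 * m),
    f v = x ∧ f (v + (x : ZMod (2 * m))) = x ∧
    ∀ w : ZMod (2 * m), f w = x → w = v ∨ w = v + (x : ZMod (2 * m))

/-- The edge of the `2m`-cycle between positions `e` and `e+1` is removable:
cutting the circle there yields a valid linear Skolem sequence, i.e. every
symbol pair lies within the resulting linear order. -/
def RemovableEdge (m : ℕ) (f : ZMod (2 * m) → ℕ) (e : ZMod (2 * m)) : Prop :=
  ∀ x ∈ Finset.Icc 1 m, ∃ k : ℕ, 1 ≤ k ∧ k + x ≤ 2 * m ∧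
    f (e + (k : ZMod (2 * m))) = x ∧ f (e + ((k + x : ℕ) : ZMod (2 * m))) = x

/-- A Skolem-type sequence (as a list) over the symbol set `X`: length `2|X|`,
all entries in `X`, and each `x ∈ X` appears at exactly two positions, which
differ by exactly `x`. -/
def IsSkolemTypeList (X : Finset ℕ) (L : List ℕ) : Prop :=
  L.length = 2 * X.card ∧ (∀ y ∈ L, y ∈ X) ∧
  ∀ x ∈ X, ∃ p q : ℕ, p + x = q ∧ q < L.length ∧
    L.getD p 0 = x ∧ L.getD q 0 = x ∧
    ∀ r < L.length, L.getD r 0 = x → r = p ∨ r = q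

namespace List

variable {α : Type*}

theorem exists_eq_length_flatten_take_add {Ls : List (List α)} {i : ℕ}
    (hi : i < Ls.flatten.length) :
    ∃ k, ∃ hk : k < Ls.length, ∃ p < Ls[k].length, i = (Ls.take k).flatten.length + p := by
  induction Ls generalizing i with
  | nil => simp at hi
  | cons l Ls ih =>
    rw [flatten_cons, length_append] at hi
    by_cases hil : i < l.length
    · exact ⟨0, by simp, i, hil, by simp⟩
    · obtain ⟨k, hk, p, hp, hi'⟩ := ih (i := i - l.length) (by omega)
      refine ⟨k + 1, by simpa using hk, p, by simpa using hp, ?_⟩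
      rw [take_succ_cons, flatten_cons, length_append]
      omega

theorem getD_flatten_length_take_add {Ls : List (List α)} {k : ℕ} (hk : k < Ls.length)
    {p : ℕ} (hp : p < Ls[k].length) (d : α) :
    Ls.flatten.getD ((Ls.take k).flatten.length + p) d = Ls[k].getD p d := by
  have hsplit : Ls.flatten = (Ls.take k).flatten ++ (Ls[k] ++ (Ls.drop (k + 1)).flatten) := by
    rw [← flatten_cons, ← drop_eq_getElem_cons hk, ← flatten_append, take_append_drop]
  rw [hsplit, getD_append_right _ _ _ _ (Nat.le_add_right _ _), Nat.add_sub_cancel_left,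
    getD_append _ _ _ _ hp]

theorem length_flatten_take_add_le {Ls : List (List α)} {k n : ℕ} (hk : k < Ls.length)
    (hkn : k < n) :
    (Ls.take k).flatten.length + Ls[k].length ≤ (Ls.take n).flatten.length := by
  obtain ⟨c, rfl⟩ := Nat.exists_eq_add_of_lt hkn
  rw [Nat.add_right_comm, take_add, take_add_one, getElem?_eq_getElem hk]
  simp only [Option.toList_some, flatten_append, flatten_cons, flatten_nil, length_append]
  omega

end List

section Blocks

variable {α : Type*} {j : ℕ} (L : Fin j → List α)

def blockStart (n : ℕ) : ℕ := ((List.ofFn L).take n).flatten.length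

variable {L}

theorem getD_flatten_ofFn_blockStart_add (k : Fin j) {p : ℕ} (hp : p < (L k).length) (d : α) :
    (List.ofFn L).flatten.getD (blockStart L k + p) d = (L k).getD p d := by
  simpa [blockStart] using
    List.getD_flatten_length_take_add (Ls := List.ofFn L) (k := k) (by simp) (by simpa using hp) d

theorem exists_eq_blockStart_add {i : ℕ} (hi : i < (List.ofFn L).flatten.length) :
    ∃ k : Fin j, ∃ p < (L k).length, i = blockStart L k + p := by
  obtain ⟨k, hk, p, hp, rfl⟩ := List.exists_eq_length_flatten_take_add hi
  rw [List.length_ofFn] at hk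
  exact ⟨⟨k, hk⟩, p, by simpa using hp, rfl⟩

theorem blockStart_add_length_le (k : Fin j) {n : ℕ} (hkn : k.val < n) :
    blockStart L k + (L k).length ≤ blockStart L n := by
  simpa [blockStart, -List.length_flatten] using
    List.length_flatten_take_add_le (Ls := List.ofFn L) (k := k) (by simp) hkn

theorem blockStart_add_length_le_length_flatten (k : Fin j) :
    blockStart L k + (L k).length ≤ (List.ofFn L).flatten.length := by
  simpa [blockStart, List.take_of_length_le] using blockStart_add_length_le (L := L) k k.isLt

theorem blockStart_le_or_lt_blockStart (k l : Fin j) {a b : ℕ} (ha : blockStart L k ≤ a)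
    (hb : b < blockStart L k + (L k).length) : blockStart L l ≤ a ∨ b < blockStart L l := by
  rcases lt_trichotomy l k with hlk | rfl | hkl
  · have := blockStart_add_length_le (L := L) l hlk
    omega
  · exact Or.inl ha
  · have := blockStart_add_length_le (L := L) k hkl
    omega

theorem blockStart_strictMono (hne : ∀ k, L k ≠ []) :
    StrictMono fun k : Fin j ↦ blockStart L k := by
  intro k l hkl
  show blockStart L k < blockStart L l
  have := blockStart_add_length_le (L := L) k hkl
  have := List.length_pos_of_ne_nil (hne k)
  omega

end Blocks

theorem IsSkolemTypeList.ne_nil {X : Finset ℕ} {L : List ℕ} (h : IsSkolemTypeList X L)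
    (hX : X.Nonempty) : L ≠ [] := by
  rintro rfl
  have := h.1
  rw [List.length_nil] at this
  have := hX.card_pos
  omega

section Concat

variable {j : ℕ} {L : Fin j → List ℕ} {X : Fin j → Finset ℕ}

theorem length_flatten_ofFn_of_isSkolemTypeList (hL : ∀ k, IsSkolemTypeList (X k) (L k))
    (hdisj : ∀ k l : Fin j, k ≠ l → Disjoint (X k) (X l)) :
    (List.ofFn L).flatten.length = 2 * (Finset.univ.biUnion X).card := by
  rw [List.length_flatten, List.map_ofFn, List.sum_ofFn,
    Finset.card_biUnion fun k _ l _ h ↦ hdisj k l h, Finset.mul_sum]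
  exact Finset.sum_congr rfl fun k _ ↦ (hL k).1

theorem exists_eq_blockStart_add_of_getD_flatten_eq (hL : ∀ k, ∀ y ∈ L k, y ∈ X k)
    (hdisj : ∀ k l : Fin j, k ≠ l → Disjoint (X k) (X l)) {k : Fin j} {x i : ℕ} (hx : x ∈ X k)
    (hi : i < (List.ofFn L).flatten.length) (hix : (List.ofFn L).flatten.getD i 0 = x) :
    ∃ r < (L k).length, i = blockStart L k + r ∧ (L k).getD r 0 = x := by
  obtain ⟨l, r, hr, rfl⟩ := exists_eq_blockStart_add hi
  rw [getD_flatten_ofFn_blockStart_add l hr] at hix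
  have hxl : x ∈ X l := hL l x (hix ▸ List.getD_eq_getElem _ _ hr ▸ List.getElem_mem hr)
  obtain rfl : l = k := by_contra fun hlk ↦ Finset.disjoint_left.mp (hdisj l k hlk) hxl hx
  exact ⟨r, hr, rfl, hix⟩

theorem exists_skolemPair_in_block (hL : ∀ k, IsSkolemTypeList (X k) (L k))
    (hdisj : ∀ k l : Fin j, k ≠ l → Disjoint (X k) (X l)) {k : Fin j} {x : ℕ} (hx : x ∈ X k) :
    ∃ a, blockStart L k ≤ a ∧ a + x < blockStart L k + (L k).length ∧
      (List.ofFn L).flatten.getD a 0 = x ∧ (List.ofFn L).flatten.getD (a + x) 0 = x ∧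
      ∀ i < (List.ofFn L).flatten.length, (List.ofFn L).flatten.getD i 0 = x →
        i = a ∨ i = a + x := by
  obtain ⟨p, q, rfl, hq, hp, hq', huniq⟩ := (hL k).2.2 x hx
  refine ⟨blockStart L k + p, by omega, by omega, ?_, ?_, fun i hi hix ↦ ?_⟩
  · rwa [getD_flatten_ofFn_blockStart_add k (by omega)]
  · rwa [add_assoc, getD_flatten_ofFn_blockStart_add k hq]
  · obtain ⟨r, hr, rfl, hrx⟩ :=
      exists_eq_blockStart_add_of_getD_flatten_eq (fun k ↦ (hL k).2.1) hdisj hx hi hix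
    rcases huniq r hr hrx with rfl | rfl <;> omega

end Concat

section Circle

variable {m : ℕ} {f : ZMod (2 * m) → ℕ} {g : ℕ → ℕ}

theorem isSkolemCircleLabel_of_forall_pair [NeZero (2 * m)] (hf : ∀ i < 2 * m, f i = g i)
    (h : ∀ x ∈ Finset.Icc 1 m, ∃ a, a + x < 2 * m ∧ g a = x ∧ g (a + x) = x ∧
      ∀ i < 2 * m, g i = x → i = a ∨ i = a + x) :
    IsSkolemCircleLabel m f := by
  intro x hx
  obtain ⟨a, hax, ha, hax', huniq⟩ := h x hx
  refine ⟨a, by rw [hf a (by omega), ha], by rw [← Nat.cast_add, hf _ hax, hax'], fun w hw ↦ ?_⟩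
  rw [← ZMod.natCast_zmod_val w, ← Nat.cast_add]
  rw [← ZMod.natCast_zmod_val w, hf _ w.val_lt] at hw
  rcases huniq _ w.val_lt hw with h | h <;> simp [h]

theorem removableEdge_of_forall_pair {s : ℕ} (hs : s ≤ 2 * m) (hf : ∀ i < 2 * m, f i = g i)
    (h : ∀ x ∈ Finset.Icc 1 m, ∃ a, a + x < 2 * m ∧ g a = x ∧ g (a + x) = x ∧
      (s ≤ a ∨ a + x < s)) :
    RemovableEdge m f ((s : ZMod (2 * m)) - 1) := by
  have hshift : ∀ b, s ≤ b + 1 → (s : ZMod (2 * m)) - 1 + ((b + 1 - s : ℕ) : ZMod (2 * m)) = b :=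
    fun b hb ↦ by rw [Nat.cast_sub hb]; push_cast; ring
  have hwrap : ∀ b : ℕ, ((b + 2 * m : ℕ) : ZMod (2 * m)) = b := fun b ↦ by
    rw [Nat.cast_add, ZMod.natCast_self, add_zero]
  intro x hx
  have hx1 := (Finset.mem_Icc.mp hx).1
  obtain ⟨a, hax, ha, hax', hcut | hcut⟩ := h x hx
  · refine ⟨a + 1 - s, by omega, by omega, ?_, ?_⟩
    · rw [hshift a (by omega), hf a (by omega), ha]
    · rw [show a + 1 - s + x = a + x + 1 - s by omega, hshift _ (by omega), hf _ hax, hax']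
  · -- the pair lies before the cut, so it is reached after going once around the cycle
    refine ⟨a + 2 * m + 1 - s, by omega, by omega, ?_, ?_⟩
    · rw [hshift _ (by omega), hwrap, hf a (by omega), ha]
    · rw [show a + 2 * m + 1 - s + x = a + x + 2 * m + 1 - s by omega, hshift _ (by omega),
        hwrap, hf _ hax, hax']

end Circle

/-- Gluing lemma: concatenating Skolem-type sequences over pairwise disjoint
symbol sets whose union is `{1,…,m}`, and wrapping around the `2m`-cycle, gives
a Skolem circle which is `j`-edge-removable. -/
theorem skolemCircle_of_concat (m j : ℕ) (hm : 1 ≤ m)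
    (L : Fin j → List ℕ) (X : Fin j → Finset ℕ)
    (hX : ∀ k, (X k).Nonempty)
    (hL : ∀ k, IsSkolemTypeList (X k) (L k))
    (hdisj : ∀ k l : Fin j, k ≠ l → Disjoint (X k) (X l))
    (hunion : (Finset.univ : Finset (Fin j)).biUnion X = Finset.Icc 1 m)
    (f : ZMod (2 * m) → ℕ)
    (hf : ∀ i : ℕ, i < ((List.ofFn L).flatten).length →
      f ((i : ℕ) : ZMod (2 * m)) = ((List.ofFn L).flatten).getD i 0) :
    IsSkolemCircleLabel m f ∧ j ≤ {e : ZMod (2 * m) | RemovableEdge m f e}.ncard := by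
  have : NeZero (2 * m) := ⟨by omega⟩
  have hlen : (List.ofFn L).flatten.length = 2 * m := by
    rw [length_flatten_ofFn_of_isSkolemTypeList hL hdisj, hunion, Nat.card_Icc, Nat.add_sub_cancel]
  rw [hlen] at hf
  have hblock : ∀ x ∈ Finset.Icc 1 m, ∃ k, x ∈ X k := fun x hx ↦
    let ⟨k, _, hxk⟩ := Finset.mem_biUnion.mp (hunion ▸ hx)
    ⟨k, hxk⟩
  have hend := blockStart_add_length_le_length_flatten (L := L)
  rw [hlen] at hend
  refine ⟨isSkolemCircleLabel_of_forall_pair hf fun x hx ↦ ?_, ?_⟩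
  · obtain ⟨k, hxk⟩ := hblock x hx
    obtain ⟨a, -, hak, ha, hax, huniq⟩ := exists_skolemPair_in_block hL hdisj hxk
    exact ⟨a, by linarith [hend k], ha, hax, hlen ▸ huniq⟩
  have hrem (l : Fin j) : RemovableEdge m f ((blockStart L l : ZMod (2 * m)) - 1) :=
    removableEdge_of_forall_pair (by linarith [hend l]) hf fun x hx ↦
      let ⟨k, hxk⟩ := hblock x hx
      let ⟨a, hka, hak, ha, hax, _⟩ := exists_skolemPair_in_block hL hdisj hxk
      ⟨a, by linarith [hend k], ha, hax, blockStart_le_or_lt_blockStart k l hka hak⟩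
  have hne (k : Fin j) : L k ≠ [] := (hL k).ne_nil (hX k)
  have hinj : Function.Injective fun l : Fin j ↦ (blockStart L l : ZMod (2 * m)) - 1 := by
    intro k l hkl
    have hlt (k : Fin j) : blockStart L k < 2 * m :=
      (Nat.lt_add_of_pos_right (List.length_pos_of_ne_nil (hne k))).trans_le (hend k)
    refine (blockStart_strictMono hne).injective ?_
    simpa [ZMod.natCast_eq_natCast_iff', Nat.mod_eq_of_lt (hlt _)] using hkl
  simpa using Set.ncard_le_ncard_of_injOn (s := Set.univ) (t := {e | RemovableEdge m f e}) _
    (fun l _ ↦ hrem l) hinj.injOn (Set.toFinite _)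
end

section
/- For every j ∈ ℕ, there exists a j-edge-removable Skolem circle of order ⌊3^{j+1}/2⌋ = (3^{j+1} − 1)/2. -/
/-- Local Langford-block labeling: positions `0..4d-3`, symbols `d..3d-2`. -/
def Lb (d q : ℕ) : ℕ :=
  if q < d then 3*d - 2 - 2*q
  else if q < 2*d - 1 then 5*d - 3 - 2*q
  else if q < 3*d - 1 then 2*q + 2 - 3*d
  else 2*q + 3 - 5*d

/-- First position of symbol `x` in the block with parameter `d`. -/
def qf (d x : ℕ) : ℕ := if 2 ∣ (x + d) then (3*d - 2 - x)/2 else (5*d - 3 - x)/2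

lemma Lb_range (d q : ℕ) (hd : 1 ≤ d) (hq : q < 4*d - 2) :
    d ≤ Lb d q ∧ Lb d q ≤ 3*d - 2 := by
  unfold Lb; split_ifs <;> omega

lemma Lb_qf (d x : ℕ) (hd : 1 ≤ d) (h1 : d ≤ x) (h2 : x ≤ 3*d-2) :
    qf d x + x < 4*d - 2 ∧ Lb d (qf d x) = x ∧ Lb d (qf d x + x) = x := by
  unfold Lb qf; split_ifs <;> omega

lemma Lb_inv (d q x : ℕ) (hd : 1 ≤ d) (hq : q < 4*d-2) (h : Lb d q = x) :
    q = qf d x ∨ q = qf d x + x := by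
  unfold Lb at h; unfold qf; split_ifs at * <;> omega

/-- Global labeling of position `p`: block `i = log 3 (p+1)`. -/
def Fg (p : ℕ) : ℕ :=
  Lb ((3^(Nat.log 3 (p+1)) + 1)/2) (p + 1 - 3^(Nat.log 3 (p+1)))

/-- Block index of symbol `x`. -/
def blk (x : ℕ) : ℕ := Nat.log 3 (2*x-1)

/-- First global position of symbol `x`. -/
def pos0 (x : ℕ) : ℕ := 3^(blk x) - 1 + qf ((3^(blk x)+1)/2) x

lemma two_d (i : ℕ) : 2 * ((3^i + 1)/2) = 3^i + 1 := by
  obtain ⟨c, hc⟩ : Odd (3^i) := Odd.pow (by decide)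
  omega

lemma pow3_pos (i : ℕ) : 1 ≤ 3^i := Nat.one_le_pow _ _ (by norm_num)

lemma pow3_succ (i : ℕ) : 3^(i+1) = 3 * 3^i := by rw [pow_succ]; ring

lemma Fg_block (i q : ℕ) (hq : q < 2 * 3^i) :
    Fg (3^i - 1 + q) = Lb ((3^i + 1)/2) q := by
  have h1 := pow3_pos i
  have h2 := pow3_succ i
  have hlog : Nat.log 3 ((3^i - 1 + q) + 1) = i :=
    Nat.log_eq_of_pow_le_of_lt_pow (by omega) (by omega)
  unfold Fg; rw [hlog]; congr 1; omega

lemma sym_block (x : ℕ) (hx : 1 ≤ x) :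
    (3^(blk x) + 1)/2 ≤ x ∧ x ≤ 3 * ((3^(blk x) + 1)/2) - 2 := by
  have h1 : 3^(blk x) ≤ 2*x-1 := Nat.pow_log_le_self 3 (by omega)
  have h2 : 2*x-1 < 3^(blk x + 1) := Nat.lt_pow_succ_log_self (by norm_num) _
  have h3 := two_d (blk x)
  have h4 := pow3_succ (blk x)
  obtain ⟨c, hc⟩ : Odd (3^(blk x + 1)) := Odd.pow (by decide)
  omega

/-- Placement of symbol `x`. -/
lemma place (x : ℕ) (hx : 1 ≤ x) :
    3^(blk x) - 1 ≤ pos0 x ∧ pos0 x + x ≤ 3^(blk x + 1) - 2 ∧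
    Fg (pos0 x) = x ∧ Fg (pos0 x + x) = x := by
  obtain ⟨h1, h2⟩ := sym_block x hx
  have hd := two_d (blk x)
  have hd1 : 1 ≤ (3^(blk x) + 1)/2 := by have := pow3_pos (blk x); omega
  obtain ⟨hq1, hL1, hL2⟩ := Lb_qf _ x hd1 h1 h2
  have h4 := pow3_succ (blk x)
  have h5 := pow3_pos (blk x)
  refine ⟨by unfold pos0; omega, by unfold pos0; omega, ?_, ?_⟩
  · have := Fg_block (blk x) (qf ((3^(blk x)+1)/2) x) (by omega)
    unfold pos0; rw [this]; exact hL1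
  · have := Fg_block (blk x) (qf ((3^(blk x)+1)/2) x + x) (by omega)
    unfold pos0; rw [show 3^(blk x) - 1 + qf ((3^(blk x)+1)/2) x + x
      = 3^(blk x) - 1 + (qf ((3^(blk x)+1)/2) x + x) by omega, this]
    exact hL2

/-- Inversion: any position labelled `x` is one of the two canonical positions. -/
lemma Fg_inv (p x : ℕ) (h : Fg p = x) : p = pos0 x ∨ p = pos0 x + x := by
  set i' := Nat.log 3 (p+1) with hi'
  have h1 : 3^i' ≤ p+1 := Nat.pow_log_le_self 3 (by omega)
  have h2 : p+1 < 3^(i'+1) := Nat.lt_pow_succ_log_self (by norm_num) _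
  have hd := two_d i'
  have h4 := pow3_succ i'
  have h5 := pow3_pos i'
  have hd1 : 1 ≤ (3^i' + 1)/2 := by omega
  have hq : p + 1 - 3^i' < 4 * ((3^i'+1)/2) - 2 := by omega
  have hFg : Lb ((3^i'+1)/2) (p + 1 - 3^i') = x := by
    unfold Fg at h; rw [← hi'] at h; exact h
  obtain ⟨hr1, hr2⟩ := Lb_range _ _ hd1 hq
  rw [hFg] at hr1 hr2
  have hblk : blk x = i' := by
    unfold blk
    exact Nat.log_eq_of_pow_le_of_lt_pow (by omega) (by omega)
  rcases Lb_inv _ _ x hd1 hq hFg with hcase | hcase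
  · left; unfold pos0; rw [hblk]; omega
  · right; unfold pos0; rw [hblk]; omega

theorem main_aux (j m : ℕ) (hm : 2*m + 1 = 3^(j+1)) :
    ∃ f : ZMod (2*m) → ℕ, IsSkolemCircleLabel m f ∧
      j ≤ {e : ZMod (2*m) | RemovableEdge m f e}.ncard := by
  have hp := pow3_pos j
  have hps := pow3_succ j
  have hMpos : 0 < 2*m := by omega
  haveI : NeZero (2*m) := ⟨by omega⟩
  have key : ∀ x, 1 ≤ x → x ≤ m → blk x ≤ j ∧ pos0 x + x < 2*m := by
    intro x h1 h2
    have h3 : 3^(blk x) ≤ 2*x-1 := Nat.pow_log_le_self 3 (by omega)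
    have hbj : blk x ≤ j := by
      by_contra hcon
      have : 3^(j+1) ≤ 3^(blk x) := Nat.pow_le_pow_right (by norm_num) (by omega)
      omega
    obtain ⟨-, hpx, -, -⟩ := place x h1
    have hmon : 3^(blk x + 1) ≤ 3^(j+1) := Nat.pow_le_pow_right (by norm_num) (by omega)
    exact ⟨hbj, by omega⟩
  refine ⟨fun v => Fg v.val, ?_, ?_⟩
  · intro x hx
    simp only [Finset.mem_Icc] at hx
    obtain ⟨hbj, hpx⟩ := key x hx.1 hx.2
    obtain ⟨-, -, hF1, hF2⟩ := place x hx.1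
    have hv : ((pos0 x : ℕ) : ZMod (2*m)).val = pos0 x := ZMod.val_cast_of_lt (by omega)
    have hvx : (((pos0 x : ℕ) : ZMod (2*m)) + (x : ZMod (2*m)))
        = ((pos0 x + x : ℕ) : ZMod (2*m)) := by push_cast; ring
    have hvx2 : ((pos0 x + x : ℕ) : ZMod (2*m)).val = pos0 x + x :=
      ZMod.val_cast_of_lt (by omega)
    refine ⟨((pos0 x : ℕ) : ZMod (2*m)), ?_, ?_, ?_⟩
    · show Fg (((pos0 x : ℕ) : ZMod (2*m)).val) = x
      rw [hv]; exact hF1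
    · show Fg ((((pos0 x : ℕ) : ZMod (2*m)) + (x : ZMod (2*m))).val) = x
      rw [hvx, hvx2]; exact hF2
    · intro w hw
      have hwv : ((w.val : ℕ) : ZMod (2*m)) = w := ZMod.natCast_rightInverse w
      rcases Fg_inv w.val x hw with h | h
      · left; rw [← hwv, h]
      · right; rw [← hwv, h, hvx]
  · have hsub : (fun i => ((3^i - 2 : ℕ) : ZMod (2*m))) '' (Finset.Icc 1 j : Set ℕ)
        ⊆ {e : ZMod (2*m) | RemovableEdge m (fun v => Fg v.val) e} := by
      rintro - ⟨i, hi, rfl⟩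
      simp only [Finset.coe_Icc, Set.mem_Icc] at hi
      intro x hx
      simp only [Finset.mem_Icc] at hx
      obtain ⟨hbj, hpx⟩ := key x hx.1 hx.2
      obtain ⟨hp1, hp2, hF1, hF2⟩ := place x hx.1
      have h3i : 3^i ≤ 3^j := Nat.pow_le_pow_right (by norm_num) hi.2
      have h3i1 : 3 ≤ 3^i := by
        calc (3:ℕ) = 3^1 := rfl
        _ ≤ 3^i := Nat.pow_le_pow_right (by norm_num) hi.1
      rcases le_or_gt (3^i) (3^(blk x)) with hcase | hcase
      · refine ⟨pos0 x + 2 - 3^i, by omega, by omega, ?_, ?_⟩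
        · have he : ((3^i - 2 : ℕ) : ZMod (2*m)) + ((pos0 x + 2 - 3^i : ℕ) : ZMod (2*m))
              = ((pos0 x : ℕ) : ZMod (2*m)) := by
            rw [← Nat.cast_add]; congr 1; omega
          simp only [he, ZMod.val_cast_of_lt (show pos0 x < 2*m by omega)]
          exact hF1
        · have he : ((3^i - 2 : ℕ) : ZMod (2*m)) + (((pos0 x + 2 - 3^i) + x : ℕ) : ZMod (2*m))
              = ((pos0 x + x : ℕ) : ZMod (2*m)) := by
            rw [← Nat.cast_add]; congr 1; omega
          simp only [he, ZMod.val_cast_of_lt (show pos0 x + x < 2*m by omega)]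
          exact hF2
      · have hble : blk x + 1 ≤ i := by
          by_contra hcon
          have : 3^i ≤ 3^(blk x) := Nat.pow_le_pow_right (by norm_num) (by omega)
          omega
        have h3b : 3^(blk x + 1) ≤ 3^i := Nat.pow_le_pow_right (by norm_num) hble
        refine ⟨pos0 x + 2*m + 2 - 3^i, by omega, by omega, ?_, ?_⟩
        · have he : ((3^i - 2 : ℕ) : ZMod (2*m)) + ((pos0 x + 2*m + 2 - 3^i : ℕ) : ZMod (2*m))
              = ((pos0 x : ℕ) : ZMod (2*m)) := by
            rw [← Nat.cast_add]
            rw [show (3^i - 2) + (pos0 x + 2*m + 2 - 3^i) = pos0 x + 2*m by omega]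
            rw [Nat.cast_add, ZMod.natCast_self, add_zero]
          simp only [he, ZMod.val_cast_of_lt (show pos0 x < 2*m by omega)]
          exact hF1
        · have he : ((3^i - 2 : ℕ) : ZMod (2*m)) + (((pos0 x + 2*m + 2 - 3^i) + x : ℕ) : ZMod (2*m))
              = ((pos0 x + x : ℕ) : ZMod (2*m)) := by
            rw [← Nat.cast_add]
            rw [show (3^i - 2) + ((pos0 x + 2*m + 2 - 3^i) + x) = (pos0 x + x) + 2*m by omega]
            rw [Nat.cast_add, ZMod.natCast_self, add_zero]
          simp only [he, ZMod.val_cast_of_lt (show pos0 x + x < 2*m by omega)]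
          exact hF2
    have hinj : Set.InjOn (fun i => ((3^i - 2 : ℕ) : ZMod (2*m)))
        (Finset.Icc 1 j : Set ℕ) := by
      intro a ha b hb hab
      simp only [Finset.coe_Icc, Set.mem_Icc] at ha hb
      have h3a : 3^a ≤ 3^j := Nat.pow_le_pow_right (by norm_num) ha.2
      have h3b : 3^b ≤ 3^j := Nat.pow_le_pow_right (by norm_num) hb.2
      have hva : ((3^a - 2 : ℕ) : ZMod (2*m)).val = 3^a - 2 := ZMod.val_cast_of_lt (by omega)
      have hvb : ((3^b - 2 : ℕ) : ZMod (2*m)).val = 3^b - 2 := ZMod.val_cast_of_lt (by omega)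
      have hval : 3^a - 2 = 3^b - 2 := by
        have h0 := congrArg ZMod.val hab
        simpa [hva, hvb] using h0
      have hpa : 3 ≤ 3^a := by
        calc (3:ℕ) = 3^1 := rfl
        _ ≤ 3^a := Nat.pow_le_pow_right (by norm_num) ha.1
      have hpb : 3 ≤ 3^b := by
        calc (3:ℕ) = 3^1 := rfl
        _ ≤ 3^b := Nat.pow_le_pow_right (by norm_num) hb.1
      exact Nat.pow_right_injective (by norm_num) (show 3^a = 3^b by omega)
    calc j = ((Finset.Icc 1 j : Finset ℕ) : Set ℕ).ncard := by
            rw [Set.ncard_coe_finset, Nat.card_Icc]; omega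
      _ = ((fun i => ((3^i - 2 : ℕ) : ZMod (2*m))) '' (Finset.Icc 1 j : Set ℕ)).ncard :=
            (Set.ncard_image_of_injOn hinj).symm
      _ ≤ _ := Set.ncard_le_ncard hsub (Set.toFinite _)


/-- For every `j` there is a Skolem circle of order `⌊3^(j+1)/2⌋` with at least
`j` removable edges. -/
theorem exists_j_edge_removable (j : ℕ) :
    ∃ f : ZMod (2 * (3 ^ (j + 1) / 2)) → ℕ,
      IsSkolemCircleLabel (3 ^ (j + 1) / 2) f ∧
      j ≤ {e : ZMod (2 * (3 ^ (j + 1) / 2)) | RemovableEdge (3 ^ (j + 1) / 2) f e}.ncard := by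
  obtain ⟨c, hc⟩ : Odd (3^(j+1)) := Odd.pow (by decide)
  exact main_aux j (3^(j+1)/2) (by omega)
end

section
/- Any Skolem circle of order m ≥ 2 has at most 2 + log₂(m) removable edges; in particular the number of removable edges of a Skolem circle of order m is O(log m). -/
/-!
Cut the circle at a set `E` of removable edges into `|E|` gaps. A removable edge never lies inside
the arc `v, v + 1, …, v + x` of a symbol `x < m` (otherwise the two occurrences of `x` would not
both be read off the cut sequence), so that arc lies in a single gap, of length `> x`. The
`2 (m - s)` positions of the symbols `s, …, m - 1` thus avoid all gaps of length `≤ s`, which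
therefore have total length `≤ 2 s`. Hence the longest gap is at least as long as all the others
together, removing it at least halves the total length, and as every gap is nonempty,
`2 ^ |E| ≤ 2 · 2m`.
-/

open Finset

theorem two_pow_card_le_two_mul_sum {ι : Type*} [DecidableEq ι] (E : Finset ι) (g : ι → ℕ)
    (hE : E.Nonempty) (hpos : ∀ e ∈ E, 0 < g e)
    (hsmall : ∀ R ⊆ E, ∀ s, 0 < s → (∀ e ∈ R, g e ≤ s) → ∑ e ∈ R, g e ≤ 2 * s) :
    2 ^ #E ≤ 2 * ∑ e ∈ E, g e := by
  induction E using Finset.induction_on_max_value g with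
  | empty => simp at hE
  | insert a R haR hmax ih =>
    have hR : R ⊆ insert a R := subset_insert a R
    have ha := hpos a (mem_insert_self a R)
    have hhalf : ∑ e ∈ insert a R, g e ≤ 2 * g a :=
      hsmall _ subset_rfl _ ha (forall_mem_insert .. |>.2 ⟨le_rfl, hmax⟩)
    rw [sum_insert haR] at hhalf ⊢
    rw [card_insert_of_notMem haR, pow_succ]
    rcases R.eq_empty_or_nonempty with rfl | hRne
    · simp only [card_empty, pow_zero]
      omega
    · have := ih hRne (fun e he => hpos e (hR he)) (fun R' hR' => hsmall R' (hR'.trans hR))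
      omega

theorem ZMod.natCast_ne_zero_of_pos_of_lt {n a : ℕ} (h0 : 0 < a) (h : a < n) :
    (a : ZMod n) ≠ 0 := by
  rw [Ne, ZMod.natCast_eq_zero_iff]
  exact Nat.not_dvd_of_pos_of_lt h0 h

namespace CircleCut

variable {n : ℕ} (E : Finset (ZMod n))

/- Edge `e` joins positions `e` and `e + 1`. Walking back from `w`, the first edge of `E` met is
`cutBefore E w`; the gap of `e ∈ E` is the set of positions `w` with `cutBefore E w = e`. For empty
`E` the infimum is the junk value `0`, whence the nonemptiness hypotheses below. -/
noncomputable def cutDist (w : ZMod n) : ℕ := sInf {d : ℕ | w - 1 - d ∈ E}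

noncomputable def cutBefore (w : ZMod n) : ZMod n := w - 1 - cutDist E w

noncomputable def gapSize [NeZero n] (e : ZMod n) : ℕ := #{w | cutBefore E w = e}

variable {E}

theorem cutBefore_add_one_of_mem {e : ZMod n} (he : e ∈ E) : cutBefore E (e + 1) = e := by
  have h : cutDist E (e + 1) = 0 := Nat.sInf_eq_zero.2 (Or.inl (by simpa using he))
  simp [cutBefore, h]

variable [NeZero n]

theorem cutBefore_mem (hE : E.Nonempty) (w : ZMod n) : cutBefore E w ∈ E := by
  obtain ⟨e, he⟩ := hE
  refine Nat.sInf_mem (s := {d : ℕ | w - 1 - d ∈ E}) ⟨(w - 1 - e).val, ?_⟩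
  rwa [Set.mem_ofPred_eq, ZMod.natCast_zmod_val, sub_sub_cancel]

theorem cutBefore_add_one_of_notMem (hE : E.Nonempty) {w : ZMod n} (hw : w ∉ E) :
    cutBefore E (w + 1) = cutBefore E w := by
  have hpos : 1 ≤ cutDist E (w + 1) := by
    refine Nat.one_le_iff_ne_zero.2 fun h0 => hw ?_
    simpa [cutBefore, h0] using cutBefore_mem hE (w + 1)
  have hshift : cutDist E w + 1 = cutDist E (w + 1) := by
    rw [cutDist, cutDist, ← Nat.sInf_add hpos]
    congr 2
    ext d
    rw [Set.mem_ofPred_eq, Set.mem_ofPred_eq, Nat.cast_succ, add_sub_cancel_right,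
      sub_add_eq_sub_sub, sub_right_comm]
  simp only [cutBefore, ← hshift]
  push_cast
  ring

theorem cutBefore_add_natCast (hE : E.Nonempty) {v : ZMod n} {j : ℕ}
    (h : ∀ i < j, v + i ∉ E) : cutBefore E (v + j) = cutBefore E v := by
  induction j with
  | zero => simp
  | succ j ih =>
    rw [Nat.cast_succ, ← add_assoc, cutBefore_add_one_of_notMem hE (h j j.lt_succ_self)]
    exact ih fun i hi => h i (hi.trans j.lt_succ_self)

theorem lt_gapSize_cutBefore (hE : E.Nonempty) {v : ZMod n} {j : ℕ} (hj : j < n)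
    (h : ∀ i < j, v + i ∉ E) : j < gapSize E (cutBefore E v) := by
  have hinj : Set.InjOn (fun i : ℕ => v + (i : ZMod n)) (range (j + 1)) := by
    intro i hi i' hi' hii'
    simp only [coe_range, Set.mem_Iio] at hi hi'
    have := (ZMod.natCast_eq_natCast_iff' i i' n).1 (add_left_cancel hii')
    rwa [Nat.mod_eq_of_lt (by omega), Nat.mod_eq_of_lt (by omega)] at this
  have hsub : (range (j + 1)).image (fun i : ℕ => v + (i : ZMod n)) ⊆
      ({w | cutBefore E w = cutBefore E v} : Finset (ZMod n)) := by
    intro w hw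
    obtain ⟨i, hi, rfl⟩ := mem_image.1 hw
    exact mem_filter.2 ⟨mem_univ _,
      cutBefore_add_natCast hE fun i' hi' => h i' (by rw [mem_range] at hi; omega)⟩
  have := card_le_card hsub
  rwa [card_image_of_injOn hinj, card_range] at this

theorem gapSize_pos {e : ZMod n} (he : e ∈ E) : 0 < gapSize E e :=
  card_pos.2 ⟨e + 1, mem_filter.2 ⟨mem_univ _, cutBefore_add_one_of_mem he⟩⟩

theorem sum_gapSize (hE : E.Nonempty) : ∑ e ∈ E, gapSize E e = n := by
  have := card_eq_sum_card_fiberwise (s := univ) fun w _ => cutBefore_mem hE w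
  rwa [card_univ, ZMod.card, eq_comm] at this

end CircleCut

section Skolem

open CircleCut

variable {m : ℕ} {f : ZMod (2 * m) → ℕ}

theorem RemovableEdge.ne_add_natCast {e v : ZMod (2 * m)} {x i : ℕ} (he : RemovableEdge m f e)
    (hx : 0 < x) (hxm : x < m) (hpair : ∀ w, f w = x → w = v ∨ w = v + x) (hi : i < x) :
    e ≠ v + i := by
  rintro rfl
  -- after cutting inside the arc, the first occurrence of `x` met is either `v`, only reached by
  -- going around the whole circle, or `v + x`, and then the second one would be `v + 2x`
  obtain ⟨k, hk, hkx, hfk, hfkx⟩ := he x (mem_Icc.2 ⟨hx, hxm.le⟩)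
  push_cast at hfkx
  rcases hpair _ hfk with hfirst | hsecond
  · apply ZMod.natCast_ne_zero_of_pos_of_lt (a := i + k) (n := 2 * m) (by omega) (by omega)
    push_cast
    linear_combination hfirst
  · rcases hpair _ hfkx with h | h
    · apply ZMod.natCast_ne_zero_of_pos_of_lt (a := x + x) (n := 2 * m) (by omega) (by omega)
      push_cast
      linear_combination h - hsecond
    · apply ZMod.natCast_ne_zero_of_pos_of_lt (a := x) (n := 2 * m) (by omega) (by omega)
      linear_combination h - hsecond

variable [NeZero m]

theorem IsSkolemCircleLabel.card_filter_eq_two (hf : IsSkolemCircleLabel m f) {x : ℕ}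
    (hx : x ∈ Icc 1 m) : #{w | f w = x} = 2 := by
  obtain ⟨v, hv, hvx, hpair⟩ := hf x hx
  rw [mem_Icc] at hx
  have hfiber : ({w | f w = x} : Finset _) = {v, v + x} := by
    ext w
    simp only [mem_filter, mem_univ, true_and, mem_insert, mem_singleton]
    exact ⟨hpair w, by rintro (rfl | rfl) <;> assumption⟩
  rw [hfiber, card_pair]
  intro h
  exact ZMod.natCast_ne_zero_of_pos_of_lt (n := 2 * m) (a := x) (by omega) (by omega)
    (by linear_combination -h)

variable {E : Finset (ZMod (2 * m))}

theorem IsSkolemCircleLabel.label_lt_gapSize_cutBefore (hf : IsSkolemCircleLabel m f)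
    (hE : ∀ e ∈ E, RemovableEdge m f e) (hne : E.Nonempty) {w : ZMod (2 * m)} {x : ℕ}
    (hwx : f w = x) (hx : 0 < x) (hxm : x < m) : x < gapSize E (cutBefore E w) := by
  obtain ⟨v, -, -, hpair⟩ := hf x (mem_Icc.2 ⟨hx, hxm.le⟩)
  have hcut : ∀ i < x, v + i ∉ E := fun i hi he =>
    (hE _ he).ne_add_natCast hx hxm hpair hi rfl
  have hlt := lt_gapSize_cutBefore hne (by omega) hcut
  rcases hpair w hwx with rfl | rfl
  · exact hlt
  · rwa [cutBefore_add_natCast hne hcut]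

theorem IsSkolemCircleLabel.sum_gapSize_le (hf : IsSkolemCircleLabel m f)
    (hE : ∀ e ∈ E, RemovableEdge m f e) (hne : E.Nonempty) {R : Finset (ZMod (2 * m))}
    {s : ℕ} (hs : 0 < s) (hsmall : ∀ e ∈ R, gapSize E e ≤ s) :
    ∑ e ∈ R, gapSize E e ≤ 2 * s := by
  set P : Finset (ZMod (2 * m)) := {w | cutBefore E w ∈ R}
  set Q : Finset (ZMod (2 * m)) := {w | f w ∈ Ico s m}
  have hP : ∑ e ∈ R, gapSize E e = #P := sum_card_fiberwise_eq_card_filter _ _ _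
  have hQ : #Q = 2 * (m - s) := by
    rw [← sum_card_fiberwise_eq_card_filter, sum_const_nat fun x hx =>
      hf.card_filter_eq_two (Icc_subset_Icc (by omega) le_rfl (Ico_subset_Icc_self hx)),
      Nat.card_Ico, mul_comm]
  have hdisj : Disjoint P Q := by
    refine disjoint_filter.2 fun w _ hwR hwQ => ?_
    rw [mem_Ico] at hwQ
    have := hf.label_lt_gapSize_cutBefore hE hne rfl (by omega) hwQ.2
    have := hsmall _ hwR
    omega
  have := card_union_of_disjoint hdisj ▸ card_le_univ (P ∪ Q)
  rw [ZMod.card] at this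
  omega

theorem IsSkolemCircleLabel.two_pow_card_le (hf : IsSkolemCircleLabel m f)
    (hE : ∀ e ∈ E, RemovableEdge m f e) : 2 ^ #E ≤ 4 * m := by
  rcases E.eq_empty_or_nonempty with rfl | hne
  · have := NeZero.pos m
    rw [card_empty, pow_zero]
    omega
  · calc 2 ^ #E ≤ 2 * ∑ e ∈ E, gapSize E e :=
          two_pow_card_le_two_mul_sum E _ hne (fun e he => gapSize_pos he)
            fun R _ s hs hsmall => hf.sum_gapSize_le hE hne hs hsmall
      _ = 4 * m := by rw [sum_gapSize hne]; ring

end Skolem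

/-- A Skolem circle of order `m ≥ 2` has at most `2 + log₂ m` removable edges. -/
theorem removable_edges_le_log (m : ℕ) (hm : 2 ≤ m) (f : ZMod (2 * m) → ℕ)
    (hf : IsSkolemCircleLabel m f) :
    ({e : ZMod (2 * m) | RemovableEdge m f e}.ncard : ℝ) ≤ 2 + Real.logb 2 m := by
  have : NeZero m := ⟨by omega⟩
  set E := (Set.toFinite {e : ZMod (2 * m) | RemovableEdge m f e}).toFinset
  have hbound : (2 : ℝ) ^ (#E : ℝ) ≤ 4 * m := by
    rw [Real.rpow_natCast]
    exact_mod_cast hf.two_pow_card_le fun e he => (Set.Finite.mem_toFinset _).1 he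
  rw [Set.ncard_eq_toFinset_card _ (Set.toFinite _)]
  calc (#E : ℝ) ≤ Real.logb 2 (4 * m) :=
        (Real.le_logb_iff_rpow_le one_lt_two (by positivity)).2 hbound
    _ = 2 + Real.logb 2 m := by
      rw [Real.logb_mul (by norm_num) (by positivity), show (4 : ℝ) = 2 ^ (2 : ℕ) by norm_num,
        Real.logb_pow, Real.logb_self_eq_one one_lt_two]
      ring
end
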